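/- Let G be a finite almost simple group and let A be a nontrivial finite abelian group. Then for the wreath product A ≀ G constructed via the regular action of G, d(A ≀ G) ≥ d(A) + 1. -/

import Mathlib

universe u

/-- `d G`: the minimal size of a generating set of the group `G`. -/
noncomputable def dGen (G : Type u) [Group G] : ℕ :=
  sInf {n | ∃ s : Finset G, s.card = n ∧ Subgroup.closure (s : Set G) = ⊤}

/-- `d_p A`: the minimal size of a generating set of a Sylow `p`-subgroup of `A`. -/
noncomputable def dP (p : ℕ) (A : Type u) [Group A] : ℕ :=
  dGen ↥((Nonempty.some (inferInstance : Nonempty (Sylow p A)) : Sylow p A) : Subgroup A)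

/-- `S` is a nonabelian simple normal subgroup of `G` with trivial centralizer,
i.e. `G` is almost simple with socle `S`. -/
def IsAlmostSimpleSocle {G : Type u} [Group G] (S : Subgroup G) : Prop :=
  S.Normal ∧ IsSimpleGroup S ∧ (¬ ∀ a b : S, a * b = b * a) ∧
    Subgroup.centralizer (S : Set G) = ⊥

/-- `G` is an almost simple group. -/
def IsAlmostSimple (G : Type u) [Group G] : Prop :=
  ∃ S : Subgroup G, IsAlmostSimpleSocle S

/-- The action of `H` on the base group `Y → G` of a wreath product, permuting the
coordinates:  `((g_y))^h = (g_{y h⁻¹})`, where the (right) action of `H` on `Y` is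
encoded by the permutation representation `act` (so that `y^h = (act h)⁻¹ y`). -/
def wreathAut (G : Type u) {H Y : Type u} [Group G] [Group H]
    (act : H →* Equiv.Perm Y) : H →* MulAut (Y → G) where
  toFun h :=
    { toFun := fun f y => f ((act h)⁻¹ y)
      invFun := fun f y => f (act h y)
      left_inv := fun f => funext fun y => by simp
      right_inv := fun f => funext fun y => by simp
      map_mul' := fun f g => rfl }
  map_one' := by ext f y; simp
  map_mul' h₁ h₂ := by ext f y; simp [mul_inv_rev]

@[simp] lemma wreathAut_apply {G H Y : Type u} [Group G] [Group H]
    (act : H →* Equiv.Perm Y) (h : H) (f : Y → G) (y : Y) :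
    wreathAut G act h f y = f ((act h)⁻¹ y) := rfl

/-- The (permutational) wreath product `G ≀_Y H`: the semidirect product
`(∏_{y ∈ Y} G) ⋊ H` where `H` permutes the coordinates via its action on `Y`
(encoded by the permutation representation `act`). -/
abbrev Wreath (G : Type u) {H Y : Type u} [Group G] [Group H]
    (act : H →* Equiv.Perm Y) : Type u :=
  (Y → G) ⋊[wreathAut G act] H

instance semidirectFinite {N H : Type u} [Group N] [Group H] (φ : H →* MulAut N)
    [Finite N] [Finite H] : Finite (N ⋊[φ] H) :=
  Finite.of_injective (fun w : N ⋊[φ] H => (w.left, w.right)) fun a b hab => by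
    cases a; cases b
    simp_all [Prod.ext_iff]

/-- The natural imprimitive action of the wreath product `G ≀_Y H` on `G × Y`,
where the first coordinate carries the regular action of `G`:
`(x, y)^{(g_y)·h} = (x · g_y, y^h)` (encoded as a permutation representation,
i.e. via the corresponding left action `w • p = p^{w⁻¹}`). -/
def imprimPerm (G : Type u) {H Y : Type u} [Group G] [Group H]
    (act : H →* Equiv.Perm Y) :
    Wreath G act →* Equiv.Perm (G × Y) where
  toFun w :=
    { toFun := fun p => (p.1 * (w.left (act w.right p.2))⁻¹, act w.right p.2)
      invFun := fun p => (p.1 * w.left p.2, (act w.right)⁻¹ p.2)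
      left_inv := fun p => by simp
      right_inv := fun p => by simp }
  map_one' := by ext p <;> simp
  map_mul' w₁ w₂ := by
    ext p <;>
      simp [SemidirectProduct.mul_left, SemidirectProduct.mul_right, mul_inv_rev, mul_assoc]

/-- The right regular permutation representation of a group `H` on itself,
`y^h = y * h` (encoded as a homomorphism to `Equiv.Perm H`, `h ↦ (y ↦ y * h⁻¹)`). -/
def rightRegularPerm (H : Type u) [Group H] : H →* Equiv.Perm H where
  toFun h := Equiv.mulRight h⁻¹
  map_one' := by ext y; simp
  map_mul' h₁ h₂ := by ext y; simp [mul_inv_rev, mul_assoc]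

/-- The regular wreath product `G ≀ H`, constructed from the regular action of `H`
on itself. -/
abbrev RegularWreath (G H : Type u) [Group G] [Group H] : Type u :=
  Wreath G (rightRegularPerm H)

/-- Data of a finite permutation group: a finite group `W`, a finite set `Y` and a
permutation representation of `W` on `Y`. -/
structure IterData : Type (u + 1) where
  W : Type u
  Y : Type u
  [grp : Group W]
  [finW : Finite W]
  [finY : Finite Y]
  act : W →* Equiv.Perm Y

attribute [instance] IterData.grp IterData.finW IterData.finY

/-- The iterated regular wreath product: `(iterData G n).W` is
`W_{n+1} = G_n ≀ (G_{n-1} ≀ ⋯ ≀ G_0)`, acting on `(iterData G n).Y = G_n × ⋯ × G_0`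
via the natural imprimitive action `(x, y)^{(g_y)·h} = (x^{g_y}, y^h)`; the base
case is `W_1 = G_0` with its right regular action on `X_1 = G_0`. -/
def iterData (G : ℕ → Type u) [∀ n, Group (G n)] [∀ n, Finite (G n)] : ℕ → IterData
  | 0 =>
    { W := G 0
      Y := G 0
      act := rightRegularPerm (G 0) }
  | (n + 1) =>
    let D := iterData G n
    { W := Wreath (G (n + 1)) D.act
      Y := (G (n + 1)) × D.Y
      act := imprimPerm (G (n + 1)) D.act }

/-
Let `N = A^G` be the base group of `W = A ≀ G`, a subgroup of index `|G| > 1`. If `W` is generated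
by a set `S`, Schreier's lemma generates `N` by the `|G| |S|` Schreier generators, and one of them
is trivial once the transversal contains both `1` and an element of `S` outside `N`; hence
`d(N) < |G| d(W)`. On the other hand, if the prime `p` occurs most often, say `m` times, among the
elementary divisors of `A`, then `A` maps onto `(ℤ/p)^m` and, by the Chinese remainder theorem,
`d(A) ≤ m`; so `N` maps onto an elementary abelian group of rank `|G| m`, and `|G| d(A) ≤ d(N)`.
-/

open Subgroup
open scoped Finset Pointwise

lemma dGen_eq_rank (G : Type*) [Group G] [Group.FG G] : dGen G = Group.rank G := by
  obtain ⟨S, hS, hSgen⟩ := Group.rank_spec G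
  refine le_antisymm (Nat.sInf_le ⟨S, hS, hSgen⟩) ?_
  obtain ⟨T, hT, hTgen⟩ := Nat.sInf_mem (⟨_, S, hS, hSgen⟩ :
    {n | ∃ s : Finset G, s.card = n ∧ Subgroup.closure (s : Set G) = ⊤}.Nonempty)
  exact (Group.rank_le hTgen).trans_eq hT

lemma IsAlmostSimple.nontrivial {G : Type*} [Group G] (hG : IsAlmostSimple G) : Nontrivial G := by
  obtain ⟨S, -, hS, -⟩ := hG
  exact (Subtype.val_injective (p := (· ∈ S))).nontrivial

namespace Subgroup

variable {G : Type*} [Group G]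

lemma exists_isComplement_right_one_mem_mem (H : Subgroup G) {g : G} (hg : g ∉ H) :
    ∃ T, IsComplement H T ∧ 1 ∈ T ∧ g ∈ T := by
  classical
  have hne : (Quotient.mk'' 1 : Quotient (QuotientGroup.rightRel H)) ≠ Quotient.mk'' g := by
    rw [Ne, Quotient.eq'', QuotientGroup.rightRel_apply]
    simpa using hg
  let f : Quotient (QuotientGroup.rightRel H) → G :=
    Function.update (Function.update Quotient.out (Quotient.mk'' 1) 1) (Quotient.mk'' g) g
  refine ⟨Set.range f, isComplement_range_right fun q ↦ ?_, ⟨Quotient.mk'' 1, ?_⟩,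
    ⟨Quotient.mk'' g, Function.update_self ..⟩⟩
  · by_cases hqg : q = Quotient.mk'' g
    · simp [f, hqg]
    by_cases hq1 : q = Quotient.mk'' 1
    · simp [f, hq1, hne]
    · simp [f, hqg, hq1]
  · simp [f, hne]

lemma exists_finset_card_lt_index_mul_card (H : Subgroup G) [H.FiniteIndex] (hH : H ≠ ⊤)
    {S : Finset G} (hS : closure (S : Set G) = ⊤) :
    ∃ T : Finset H, #T < H.index * #S ∧ closure (T : Set H) = ⊤ := by
  classical
  obtain ⟨s, hsS, hsH⟩ : ∃ s ∈ S, s ∉ H := by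
    by_contra! h
    exact hH (top_le_iff.mp (hS ▸ (closure_le H).mpr h))
  obtain ⟨R₀, hR, hR1, hRs⟩ := H.exists_isComplement_right_one_mem_mem hsH
  set R := hR.finite_right.toFinset
  replace hR : IsComplement (H : Set G) (R : Set G) := by rwa [Set.Finite.coe_toFinset]
  replace hR1 : (1 : G) ∈ R := by rwa [Set.Finite.mem_toFinset]
  replace hRs : s ∈ R := by rwa [Set.Finite.mem_toFinset]
  set U : Finset H := (R * S).image fun g ↦ ⟨_, hR.mul_inv_toRightFun_mem g⟩
  have hU : closure (U : Set H) = ⊤ := closure_mul_image_eq_top' hR hR1 hS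
  -- the Schreier generator of `1 * s` is trivial since `s` represents its own coset
  have hU1 : 1 ∈ U := by
    refine Finset.mem_image.mpr ⟨s, Finset.mem_mul.mpr ⟨1, hR1, s, hsS, one_mul s⟩, ?_⟩
    have : hR.toRightFun s = ⟨s, hRs⟩ :=
      (isComplement_iff_existsUnique_mul_inv_mem.mp hR s).unique
        (hR.mul_inv_toRightFun_mem s) (by simp)
    simp [this]
  refine ⟨U.erase 1, ?_, ?_⟩
  · calc #(U.erase 1) < #U := Finset.card_erase_lt_of_mem hU1
      _ ≤ #(R * S) := Finset.card_image_le
      _ ≤ #R * #S := Finset.card_mul_le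
      _ = H.index * #S := by rw [← hR.card_right, Nat.card_coe_set_eq, Set.ncard_coe_finset]
  · rwa [← closure_insert_one, ← Finset.coe_insert, Finset.insert_erase hU1]

end Subgroup

namespace SemidirectProduct

lemma index_range_inl {N H : Type*} [Group N] [Group H] (φ : H →* MulAut N) :
    (inl : N →* N ⋊[φ] H).range.index = Nat.card H := by
  rw [range_inl_eq_ker_rightHom, index_ker, MonoidHom.range_eq_top.mpr rightHom_surjective,
    Subgroup.card_top]

theorem rank_add_one_le_card_mul_rank {N H : Type u} [Group N] [Group H] [Finite N] [Finite H]
    [Nontrivial H] (φ : H →* MulAut N) :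
    Group.rank N + 1 ≤ Nat.card H * Group.rank (N ⋊[φ] H) := by
  obtain ⟨S, hS, hSgen⟩ := Group.rank_spec (N ⋊[φ] H)
  have hK : (inl : N →* N ⋊[φ] H).range ≠ ⊤ := by
    rw [Ne, ← index_eq_one, index_range_inl]
    exact Finite.one_lt_card.ne'
  obtain ⟨T, hT, hTgen⟩ :=
    (inl : N →* N ⋊[φ] H).range.exists_finset_card_lt_index_mul_card hK hSgen
  calc Group.rank N + 1 = Group.rank (inl : N →* N ⋊[φ] H).range + 1 := by
        rw [Group.rank_congr (MonoidHom.ofInjective (inl_injective (φ := φ)))]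
    _ ≤ #T + 1 := by grw [Group.rank_le hTgen]
    _ ≤ Nat.card H * Group.rank (N ⋊[φ] H) := by rwa [← hS, ← index_range_inl φ]

end SemidirectProduct

section CommGroup

variable {C : Type*} [CommGroup C]

lemma mem_zpowers_mul_of_coprime {x y : C} {a b : ℕ} (hx : x ^ a = 1) (hy : y ^ b = 1)
    (hab : a.Coprime b) : x ∈ zpowers (x * y) := by
  have hbezout : (b : ℤ) * a.gcdB b = 1 - a * a.gcdA b := by
    have := Nat.gcd_eq_gcd_ab a b
    rw [hab.gcd_eq_one, Nat.cast_one] at this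
    linarith
  have hx' : x ^ ((b : ℤ) * a.gcdB b) = x := by
    rw [hbezout, zpow_sub, zpow_one, zpow_mul, zpow_natCast, hx, one_zpow, inv_one, mul_one]
  have hy' : y ^ ((b : ℤ) * a.gcdB b) = 1 := by rw [zpow_mul, zpow_natCast, hy, one_zpow]
  exact mem_zpowers_iff.mpr ⟨b * a.gcdB b, by rw [mul_zpow, hx', hy', mul_one]⟩

lemma mem_zpowers_prod_of_pairwise_coprime {ι : Type*} [DecidableEq ι] {s : Finset ι}
    {x : ι → C} {a : ι → ℕ} (hx : ∀ i ∈ s, x i ^ a i = 1)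
    (ha : (s : Set ι).Pairwise fun i j ↦ (a i).Coprime (a j)) {j : ι} (hj : j ∈ s) :
    x j ∈ zpowers (∏ i ∈ s, x i) := by
  rw [← Finset.mul_prod_erase s x hj]
  refine mem_zpowers_mul_of_coprime (hx j hj) (b := ∏ i ∈ s.erase j, a i) ?_ ?_
  · rw [← Finset.prod_pow]
    refine Finset.prod_eq_one fun i hi ↦ ?_
    obtain ⟨c, hc⟩ := Finset.dvd_prod_of_mem a hi
    rw [hc, pow_mul, hx i (Finset.mem_of_mem_erase hi), one_pow]
  · exact Nat.Coprime.prod_right fun i hi ↦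
      ha hj (Finset.mem_of_mem_erase hi) (Finset.ne_of_mem_erase hi).symm

end CommGroup

lemma exists_injective_prodMk_of_card_fiber_le {ι α : Type*} [Fintype ι] (f : ι → α) {m : ℕ}
    (hf : ∀ a, Nat.card {i // f i = a} ≤ m) :
    ∃ ν : ι → Fin m, Function.Injective fun i ↦ (f i, ν i) := by
  classical
  have e : ∀ a, {i // f i = a} ↪ Fin m := fun a ↦
    (Function.Embedding.nonempty_of_card_le (by simpa [Nat.card_eq_fintype_card] using hf a)).some
  have he : ∀ i a (h : f i = a), e a ⟨i, h⟩ = e (f i) ⟨i, rfl⟩ := by rintro i _ rfl; rfl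
  refine ⟨fun i ↦ e (f i) ⟨i, rfl⟩, fun i j hij ↦ ?_⟩
  obtain ⟨hf, hν⟩ := Prod.mk.inj hij
  dsimp only at hν
  rw [← he i (f j) hf] at hν
  exact congrArg Subtype.val ((e (f j)).injective hν)

lemma ZMod.ofAdd_one_pow (N k : ℕ) :
    Multiplicative.ofAdd (1 : ZMod N) ^ k = Multiplicative.ofAdd (k : ZMod N) := by
  rw [← ofAdd_nsmul, nsmul_one]

theorem exists_finset_card_le_closure_pi_zmod_eq_top {ι : Type*} [Fintype ι] {q n : ι → ℕ}
    (hq : ∀ i, (q i).Prime) {m : ℕ} (hfib : ∀ p, Nat.card {i // q i = p} ≤ m) :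
    ∃ S : Finset (∀ i, Multiplicative (ZMod (q i ^ n i))),
      #S ≤ m ∧ Subgroup.closure (S : Set (∀ i, Multiplicative (ZMod (q i ^ n i)))) = ⊤ := by
  classical
  have : ∀ i, NeZero (q i ^ n i) := fun i ↦ ⟨pow_ne_zero _ (hq i).ne_zero⟩
  obtain ⟨ν, hν⟩ := exists_injective_prodMk_of_card_fiber_le q hfib
  set x : ι → ∀ i, Multiplicative (ZMod (q i ^ n i)) := fun i ↦ Pi.mulSingle i (.ofAdd 1)
  -- the primes in each slot `ν⁻¹ k` are distinct, so `g k` generates every `x i` in the slot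
  set g : Fin m → ∀ i, Multiplicative (ZMod (q i ^ n i)) := fun k ↦ ∏ i with ν i = k, x i
  refine ⟨Finset.univ.image g, Finset.card_image_le.trans (by simp), ?_⟩
  have hx : ∀ i, x i ∈ Subgroup.closure (Finset.univ.image g : Set _) := by
    intro i
    have hgi : g (ν i) ∈ Finset.univ.image g := Finset.mem_image_of_mem g (Finset.mem_univ _)
    refine zpowers_le.mpr (subset_closure hgi) <|
      mem_zpowers_prod_of_pairwise_coprime (s := {j | ν j = ν i}) (a := fun i ↦ q i ^ n i)
        (fun j _ ↦ ?_) ?_ (by simp)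
    · simp [x, ← Pi.mulSingle_pow, ZMod.ofAdd_one_pow]
    · intro j hj k hk hjk
      have hq' : q j ≠ q k := fun h ↦ hjk (hν (Prod.ext h (by simp_all)))
      exact Nat.Coprime.pow _ _ ((Nat.coprime_primes (hq j) (hq k)).mpr hq')
  rw [eq_top_iff]
  rintro z -
  rw [← Finset.univ_prod_mulSingle z]
  refine prod_mem fun i _ ↦ ?_
  have : Pi.mulSingle i (z i) = x i ^ (z i).toAdd.val := by
    rw [← Pi.mulSingle_pow, ZMod.ofAdd_one_pow, ZMod.natCast_zmod_val, ofAdd_toAdd]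
  rw [this]
  exact pow_mem (hx i) _

namespace CommGroup

theorem exists_mulEquiv_pi_zmod_prime_pow (A : Type*) [CommGroup A] [Finite A] :
    ∃ (ι : Type) (_ : Fintype ι) (q n : ι → ℕ), (∀ i, (q i).Prime) ∧ (∀ i, n i ≠ 0) ∧
      Nonempty (A ≃* ∀ i, Multiplicative (ZMod (q i ^ n i))) := by
  classical
  obtain ⟨ι, _, q, hq, n, ⟨e⟩⟩ := AddCommGroup.equiv_directSum_zmod_of_finite (Additive A)
  let e' : A ≃* ∀ i, Multiplicative (ZMod (q i ^ n i)) := MulEquiv.toAdditive.symm <|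
    e.trans <| (DirectSum.addEquivProd _).trans (MulEquiv.piMultiplicative _).toAdditiveRight
  let r : (∀ i, Multiplicative (ZMod (q i ^ n i))) ≃*
      ∀ i : {i // n i ≠ 0}, Multiplicative (ZMod (q i ^ n i)) :=
    { toFun f i := f i
      invFun f i := if h : n i = 0 then 1 else f ⟨i, h⟩
      left_inv f := funext fun i ↦ by
        by_cases h : n i = 0
        · have : Subsingleton (Multiplicative (ZMod (q i ^ n i))) := by
            rw [h, pow_zero]; infer_instance
          exact Subsingleton.elim _ _
        · simp [h]
      right_inv f := funext fun i ↦ dif_neg i.2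
      map_mul' _ _ := rfl }
  exact ⟨{i // n i ≠ 0}, inferInstance, fun i ↦ q i, fun i ↦ n i, fun i ↦ hq i, fun i ↦ i.2,
    ⟨e'.trans r⟩⟩

theorem exists_surjective_pi_zmod_rank_le (A : Type*) [CommGroup A] [Finite A] :
    ∃ (p : ℕ) (F : Type) (_ : Finite F) (f : A →* (F → Multiplicative (ZMod p))),
      p.Prime ∧ Function.Surjective f ∧ Group.rank A ≤ Nat.card F := by
  classical
  obtain ⟨ι, _, q, n, hq, hn, ⟨e⟩⟩ := exists_mulEquiv_pi_zmod_prime_pow A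
  obtain ⟨p, hp, hmax⟩ : ∃ p, p.Prime ∧
      ∀ p', Nat.card {i // q i = p'} ≤ Nat.card {i // q i = p} := by
    obtain ⟨p, hpmem, hpmax⟩ := Finset.exists_max_image (insert 2 (Finset.univ.image q))
      (fun p ↦ Nat.card {i // q i = p}) (Finset.insert_nonempty _ _)
    refine ⟨p, ?_, fun p' ↦ ?_⟩
    · rcases Finset.mem_insert.mp hpmem with rfl | hp
      · exact Nat.prime_two
      · obtain ⟨i, -, rfl⟩ := Finset.mem_image.mp hp
        exact hq i
    · rcases em (∃ i, q i = p') with ⟨i, rfl⟩ | h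
      · exact hpmax _ (by simp)
      · have : IsEmpty {i // q i = p'} := ⟨fun i ↦ h ⟨i, i.2⟩⟩
        simp
  have hdvd (j : {i // q i = p}) : p ∣ q j ^ n j := by
    rw [j.2]; exact dvd_pow_self p (hn j)
  let π : (∀ i, Multiplicative (ZMod (q i ^ n i))) →* {i // q i = p} → Multiplicative (ZMod p) :=
    MonoidHom.pi fun j ↦
      (ZMod.castHom (hdvd j) (ZMod p)).toAddMonoidHom.toMultiplicative.comp
        (Pi.evalMonoidHom _ (j : ι))
  have hπ : Function.Surjective π := by
    intro y
    choose x hx using fun j ↦ ZMod.castHom_surjective (hdvd j) (y j).toAdd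
    refine ⟨fun i ↦ if h : q i = p then .ofAdd (x ⟨i, h⟩) else 1, funext fun j ↦ ?_⟩
    rw [← ofAdd_toAdd (y j), ← hx]
    simp [π, dif_pos j.2]
  obtain ⟨S, hS, hSgen⟩ := exists_finset_card_le_closure_pi_zmod_eq_top (n := n) hq hmax
  refine ⟨p, {i // q i = p}, inferInstance, π.comp e.toMonoidHom, hp, hπ.comp e.surjective, ?_⟩
  have : ∀ i, NeZero (q i ^ n i) := fun i ↦ ⟨pow_ne_zero _ (hq i).ne_zero⟩
  rw [Group.rank_congr e]
  exact (Group.rank_le hSgen).trans hS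

lemma le_rank_of_pow_eq_one {C : Type*} [CommGroup C] [Finite C] {p k : ℕ} (hp : 1 < p)
    (hC : ∀ c : C, c ^ p = 1) (hcard : Nat.card C = p ^ k) : k ≤ Group.rank C :=
  (Nat.pow_dvd_pow_iff_le_right hp).mp (hcard ▸ card_dvd_exponent_pow_rank' C hC)

theorem card_mul_rank_le_rank_pi (X A : Type*) [Finite X] [CommGroup A] [Finite A] :
    Nat.card X * Group.rank A ≤ Group.rank (X → A) := by
  obtain ⟨p, F, _, f, hp, hf, hrank⟩ := exists_surjective_pi_zmod_rank_le A
  have : Fact p.Prime := ⟨hp⟩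
  have hexp (c : X → F → Multiplicative (ZMod p)) : c ^ p = 1 := by
    ext x j
    simp
  calc Nat.card X * Group.rank A ≤ Nat.card X * Nat.card F := by gcongr
    _ ≤ Group.rank (X → F → Multiplicative (ZMod p)) :=
      le_rank_of_pow_eq_one hp.one_lt hexp (by simp [Nat.card_fun, ← pow_mul, mul_comm])
    _ ≤ Group.rank (X → A) := Group.rank_le_of_surjective (f.compLeft X) hf.comp_left

end CommGroup

theorem rank_abelian_regular_wreath_ge_general
    (G : Type) [Group G] [Finite G] (hG : IsAlmostSimple G)
    (A : Type) [CommGroup A] [Finite A] :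
    dGen A + 1 ≤ dGen (RegularWreath A G) := by
  have := hG.nontrivial
  rw [dGen_eq_rank, dGen_eq_rank]
  refine Nat.lt_of_mul_lt_mul_left (a := Nat.card G) ?_
  calc Nat.card G * Group.rank A < Group.rank (G → A) + 1 :=
        Nat.lt_succ_of_le (CommGroup.card_mul_rank_le_rank_pi G A)
    _ ≤ Nat.card G * Group.rank (RegularWreath A G) :=
        SemidirectProduct.rank_add_one_le_card_mul_rank _

/-- Let `G` be a finite almost simple group and let `A` be a nontrivial finite abelian
group. Then for the wreath product `A ≀ G` constructed via the regular action of `G`,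
`d(A ≀ G) ≥ d(A) + 1`. -/
theorem rank_abelian_regular_wreath_ge
    (G : Type) [Group G] [Finite G] (hG : IsAlmostSimple G)
    (A : Type) [CommGroup A] [Finite A] (hA : Nontrivial A) :
    dGen A + 1 ≤ dGen (RegularWreath A G) :=
  rank_abelian_regular_wreath_ge_general G hG A
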